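/- arXiv:1905.00656 — 4 statements merged into one kernel-verified Lean document; each statement's English description precedes it below -/
import Mathlib

section
/- Let X be a metric space, let ε ≥ 0, A ≥ 0 and B be real numbers, and let u, p, q, x, y be points of X. Suppose that dist(u,p) = dist(u,q) + dist(q,p), that dist(u,p) ≤ (1+ε)·dist(q,p) + 1, and that dist(q,x) ≤ A·dist(q,y) + B. Then dist(u,x) ≤ A·dist(u,y) + B + (A+1)·ε·dist(u,p) + (A+1). -/
/-!
Since `q` lies on a shortest path from `u` to `p`, the portal condition forces `q` to be close
to `u`: `dist u q ≤ ε * dist u p + 1`. Moving the base point of an inequality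
`dist q x ≤ A * dist q y + B` from `q` to `u` by the triangle inequality costs at most
`(A + 1) * dist u q`.
-/

theorem dist_le_mul_dist_add_of_dist_le_mul_dist_add {X : Type*} [PseudoMetricSpace X]
    {A B : ℝ} (hA : 0 ≤ A) {u q x y : X} (h : dist q x ≤ A * dist q y + B) :
    dist u x ≤ A * dist u y + B + (A + 1) * dist u q := by
  have hqy : dist q y ≤ dist u q + dist u y := by
    simpa only [dist_comm q u] using dist_triangle q u y
  calc dist u x ≤ dist u q + dist q x := dist_triangle u q x
    _ ≤ dist u q + (A * (dist u q + dist u y) + B) := by gcongr; exact h.trans (by gcongr)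
    _ = A * dist u y + B + (A + 1) * dist u q := by ring

theorem dist_le_mul_add_of_dist_eq_add {X : Type*} [PseudoMetricSpace X] {ε c : ℝ}
    (hε : 0 ≤ ε) {u p q : X} (h_eq : dist u p = dist u q + dist q p)
    (h_le : dist u p ≤ (1 + ε) * dist q p + c) :
    dist u q ≤ ε * dist u p + c := by
  have hqp : dist q p ≤ dist u p := by linarith [dist_nonneg (x := u) (y := q)]
  linarith [mul_le_mul_of_nonneg_left hqp hε]

theorem stmt_4 {X : Type*} [MetricSpace X] (ε A B : ℝ) (hε : 0 ≤ ε) (hA : 0 ≤ A)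
    (u p q x y : X)
    (h1 : dist u p = dist u q + dist q p)
    (h2 : dist u p ≤ (1 + ε) * dist q p + 1)
    (h3 : dist q x ≤ A * dist q y + B) :
    dist u x ≤ A * dist u y + B + (A + 1) * ε * dist u p + (A + 1) := by
  have huq : dist u q ≤ ε * dist u p + 1 := dist_le_mul_add_of_dist_eq_add hε h1 h2
  calc dist u x ≤ A * dist u y + B + (A + 1) * dist u q :=
        dist_le_mul_dist_add_of_dist_le_mul_dist_add hA h3
    _ ≤ A * dist u y + B + (A + 1) * (ε * dist u p + 1) := by gcongr
    _ = A * dist u y + B + (A + 1) * ε * dist u p + (A + 1) := by ring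
end

section
/- Let X be a metric space, let ε be a real number with 0 < ε < 1/4, and let u, p, q, w be points of X. Suppose that dist(u,p) = dist(u,q) + dist(q,p), that dist(u,p) ≤ (1+ε)·dist(q,p) + 1, and that dist(q,p) ≤ ε·dist(q,w). Then dist(u,p) ≤ 2ε·dist(u,w) + 2·(1+ε). -/
/-!
Write `a = dist u q`, `b = dist q p`, `D = dist u w`. Since `q` lies on a shortest path from `u`
to `p`, the second hypothesis says `a ≤ ε b + 1`, while the third together with the triangle
inequality gives `b ≤ ε (a + D)`. Substituting the first into the second yields
`(1 - ε²) b ≤ ε (1 + D)`, so `(1 + ε) b ≤ ε (1 + D) / (1 - ε) ≤ 2 ε (1 + D)` for `ε ≤ 1/2`,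
and `dist u p ≤ (1 + ε) b + 1` gives the claim.
-/

section

variable {X : Type*} [PseudoMetricSpace X] {ε : ℝ} {u p q w : X}

theorem one_sub_sq_mul_dist_le_of_portal (hε : 0 ≤ ε)
    (h1 : dist u p = dist u q + dist q p)
    (h2 : dist u p ≤ (1 + ε) * dist q p + 1)
    (h3 : dist q p ≤ ε * dist q w) :
    (1 - ε ^ 2) * dist q p ≤ ε * (1 + dist u w) := by
  have hu : dist u q ≤ ε * dist q p + 1 := by linarith
  have hq : dist q p ≤ ε * (dist u q + dist u w) :=
    h3.trans <| mul_le_mul_of_nonneg_left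
      (by simpa only [dist_comm q u] using dist_triangle q u w) hε
  nlinarith [mul_le_mul_of_nonneg_left hu hε]

end

theorem one_add_mul_le_of_one_sub_sq_mul_le {ε b c : ℝ} (hε0 : 0 ≤ ε) (hε1 : ε ≤ 1 / 2)
    (hc : 0 ≤ c) (h : (1 - ε ^ 2) * b ≤ ε * c) :
    (1 + ε) * b ≤ 2 * ε * c := by
  have hb : (1 - ε) * ((1 + ε) * b) ≤ (1 - ε) * (2 * ε * c) := by
    nlinarith [mul_nonneg hε0 hc]
  exact le_of_mul_le_mul_left hb (by linarith)

theorem stmt_6 {X : Type*} [MetricSpace X] (ε : ℝ) (hε0 : 0 < ε) (hε1 : ε < 1/4)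
    (u p q w : X)
    (h1 : dist u p = dist u q + dist q p)
    (h2 : dist u p ≤ (1 + ε) * dist q p + 1)
    (h3 : dist q p ≤ ε * dist q w) :
    dist u p ≤ 2 * ε * dist u w + 2 * (1 + ε) := by
  have hqp := one_add_mul_le_of_one_sub_sq_mul_le hε0.le (by linarith)
    (by positivity) (one_sub_sq_mul_dist_le_of_portal hε0.le h1 h2 h3)
  linarith
end

section
/- Let X be a metric space, let ε be a real number with 0 < ε < 1/4, and let u, p, q, w, f be points of X. Suppose that dist(u,p) = dist(u,q) + dist(q,p), that dist(u,p) ≤ (1+ε)·dist(q,p) + 1, that dist(q,p) ≤ ε·dist(q,w), and that dist(p,f) ≤ (1+ε)·dist(p,w) + 1. Then dist(u,f) ≤ (1+6ε)·dist(u,w) + 7. -/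
/-!
Travelling from `u` through the portal `q` to `p` and then to `f` costs at most
`(1 + ε) (2 d(q,p) + d(q,w)) + 2`. Since `u` lies within `ε d(q,p) + 1` of `q` and
`d(q,p) ≤ ε d(q,w)`, the triangle inequality gives `(1 - ε²) d(q,w) ≤ d(u,w) + 1`,
and `(1 + 2ε) / (1 - ε) ≤ 1 + 6ε` for `ε ≤ 1/2` absorbs the loss.
-/

section Portal

variable {X : Type*} [PseudoMetricSpace X] {ε : ℝ} {u p q w f : X}

theorem dist_le_dist_add_of_portal (h1 : dist u p = dist u q + dist q p)
    (h2 : dist u p ≤ (1 + ε) * dist q p + 1) :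
    dist q w ≤ dist u w + ε * dist q p + 1 := by
  have := dist_triangle_left q w u
  linarith

theorem dist_le_of_portal_of_profile (hε : 0 ≤ ε) (h2 : dist u p ≤ (1 + ε) * dist q p + 1)
    (h4 : dist p f ≤ (1 + ε) * dist p w + 1) :
    dist u f ≤ (1 + ε) * (2 * dist q p + dist q w) + 2 := by
  have hpw : dist p w ≤ dist q p + dist q w := dist_triangle_left p w q
  calc dist u f ≤ dist u p + dist p f := dist_triangle u p f
    _ ≤ (1 + ε) * dist q p + 1 + ((1 + ε) * dist p w + 1) := add_le_add h2 h4
    _ ≤ (1 + ε) * dist q p + 1 + ((1 + ε) * (dist q p + dist q w) + 1) := by gcongr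
    _ = (1 + ε) * (2 * dist q p + dist q w) + 2 := by ring

end Portal

theorem portal_stretch_le {ε a b x : ℝ} (hε0 : 0 ≤ ε) (hε1 : ε ≤ 1 / 2) (ha : 0 ≤ a)
    (hx : x ≤ ε * b) (hb : b ≤ a + ε * x + 1) :
    (1 + ε) * (2 * x + b) + 2 ≤ (1 + 6 * ε) * a + 7 := by
  have hb' : (1 - ε ^ 2) * b ≤ a + 1 := by nlinarith
  have hmain : (1 + ε) * (1 + 2 * ε) * b ≤ (1 + 6 * ε) * (a + 1) := by
    have h : (1 - ε) * ((1 + ε) * (1 + 2 * ε) * b) ≤ (1 - ε) * ((1 + 6 * ε) * (a + 1)) :=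
      calc (1 - ε) * ((1 + ε) * (1 + 2 * ε) * b) = (1 + 2 * ε) * ((1 - ε ^ 2) * b) := by ring
        _ ≤ (1 + 2 * ε) * (a + 1) := by gcongr
        _ ≤ (1 - ε) * ((1 + 6 * ε) * (a + 1)) := by
          nlinarith [mul_nonneg hε0 (by linarith : 0 ≤ 1 - 2 * ε)]
    exact le_of_mul_le_mul_left h (by linarith)
  calc (1 + ε) * (2 * x + b) + 2
      ≤ (1 + ε) * (1 + 2 * ε) * b + 2 := by
        nlinarith [mul_le_mul_of_nonneg_left hx (by linarith : (0 : ℝ) ≤ 1 + ε)]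
    _ ≤ (1 + 6 * ε) * (a + 1) + 2 := by linarith
    _ ≤ (1 + 6 * ε) * a + 7 := by linarith

theorem stmt_7 {X : Type*} [MetricSpace X] (ε : ℝ) (hε0 : 0 < ε) (hε1 : ε < 1/4)
    (u p q w f : X)
    (h1 : dist u p = dist u q + dist q p)
    (h2 : dist u p ≤ (1 + ε) * dist q p + 1)
    (h3 : dist q p ≤ ε * dist q w)
    (h4 : dist p f ≤ (1 + ε) * dist p w + 1) :
    dist u f ≤ (1 + 6 * ε) * dist u w + 7 :=
  (dist_le_of_portal_of_profile hε0.le h2 h4).trans <|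
    portal_stretch_le hε0.le (by linarith) dist_nonneg h3 (dist_le_dist_add_of_portal h1 h2)
end

section
/- Let X be a metric space, let ε be a real number with 0 < ε < 1/4, and let u, p, q, s, w, f be points of X. Suppose that ε·dist(q,w) ≤ dist(q,p), that dist(p,q) ≤ ε²·dist(p,s), that dist(p,s) ≤ dist(p,u), and that dist(p,f) ≤ (1+ε)·dist(p,w) + 1. Then dist(u,f) ≤ dist(u,w) + 5ε·dist(u,p) + 1. -/
/-! From `h1` and `h2`, both `dist p q` and `dist q w` are at most `ε * dist p u`, so the
replaced facility `w` lies within `ε (1 + ε) dist p u` of the client `p`. Routing `u → w → p → f`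
then costs `dist u w + (2 + ε) dist p w + 1`, and `(2 + ε)(1 + ε) ≤ 5` for `ε < 1/4`. -/

lemma dist_le_of_mul_dist_le_of_dist_le_sq_mul {X : Type*} [PseudoMetricSpace X]
    {ε r : ℝ} (hε : 0 < ε) {p q w : X}
    (hqw : ε * dist q w ≤ dist q p) (hpq : dist p q ≤ ε ^ 2 * r) :
    dist p w ≤ ε * (1 + ε) * r := by
  have hqw' : dist q w ≤ ε * r := by
    refine le_of_mul_le_mul_left ?_ hε
    calc ε * dist q w ≤ dist p q := dist_comm q p ▸ hqw
      _ ≤ ε * (ε * r) := by linarith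
  linarith [dist_triangle p q w]

theorem stmt_8 {X : Type*} [MetricSpace X] (ε : ℝ) (hε0 : 0 < ε) (hε1 : ε < 1/4)
    (u p q s w f : X)
    (h1 : ε * dist q w ≤ dist q p)
    (h2 : dist p q ≤ ε ^ 2 * dist p s)
    (h3 : dist p s ≤ dist p u)
    (h4 : dist p f ≤ (1 + ε) * dist p w + 1) :
    dist u f ≤ dist u w + 5 * ε * dist u p + 1 := by
  have hpq : dist p q ≤ ε ^ 2 * dist p u := h2.trans (by gcongr)
  have hpw := dist_le_of_mul_dist_le_of_dist_le_sq_mul hε0 h1 hpq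
  have hcoef : (2 + ε) * (1 + ε) ≤ 5 := by nlinarith
  calc dist u f ≤ dist u w + dist w p + dist p f := dist_triangle4 u w p f
    _ ≤ dist u w + (2 + ε) * dist p w + 1 := by rw [dist_comm w p]; linarith
    _ ≤ dist u w + (2 + ε) * (ε * (1 + ε) * dist p u) + 1 := by gcongr
    _ = dist u w + ((2 + ε) * (1 + ε)) * (ε * dist u p) + 1 := by rw [dist_comm p u]; ring
    _ ≤ dist u w + 5 * (ε * dist u p) + 1 := by gcongr
    _ = dist u w + 5 * ε * dist u p + 1 := by ring
end
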